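/- arXiv:2108.13127 — 3 statements merged into one kernel-verified Lean document; each statement's English description precedes it below -/
import Mathlib

section
/- Let 0 < a < b and 2 < μ < 3, and let G be the Green's function from the Hadamard fractional boundary value problem (defined piecewise via logarithms as above). Then for all t, τ, s ∈ [a, b], G(t,τ) ≥ w(t)·G(s,τ), where w(t) = (ln(t/a))^(μ-1)·(ln(b/t))/(ln(b/a))^μ. -/
/-
In the coordinates `u = log (t / a) / log (b / a)` and `v = log (b / τ) / log (b / a)`, both in
`[0, 1]`, the Green's function is `log (b / a) ^ α / Γ(μ)` times
`(u v) ^ α - ((u + v - 1)₊) ^ α` with `α = μ - 1 ≥ 1`; the weight `w(t)` is `u ^ α (1 - u)`.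
Since `u v ≤ (1 - v) v + v (u + v - 1)₊`, convexity of `x ↦ x ^ α` bounds the kernel above by
`(1 - v) v ^ α` uniformly in `u`; and `x ^ α - y ^ α ≥ x ^ (α - 1) (x - y)` for
`0 ≤ y ≤ x` bounds it below by `u ^ α (1 - u) · v ^ α (1 - v)`.
-/

noncomputable def G (a b μ : ℝ) (t τ : ℝ) : ℝ :=
  if τ ≤ t then
    (1 / (Real.Gamma μ * Real.log (b / a) ^ (μ - 1))) *
      (Real.log (t / a) ^ (μ - 1) * Real.log (b / τ) ^ (μ - 1) -
        Real.log (t / τ) ^ (μ - 1) * Real.log (b / a) ^ (μ - 1))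
  else
    (1 / (Real.Gamma μ * Real.log (b / a) ^ (μ - 1))) *
      (Real.log (t / a) ^ (μ - 1) * Real.log (b / τ) ^ (μ - 1))

open Real Set

noncomputable def greenKernel (α u v : ℝ) : ℝ :=
  (u * v) ^ α - max (u + v - 1) 0 ^ α

section greenKernel

variable {α u v : ℝ}

theorem greenKernel_le (hα : 1 ≤ α) (hu : u ∈ Icc (0 : ℝ) 1) (hv : v ∈ Icc (0 : ℝ) 1) :
    greenKernel α u v ≤ (1 - v) * v ^ α := by
  obtain ⟨hu0, hu1⟩ := hu
  obtain ⟨hv0, hv1⟩ := hv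
  set m := max (u + v - 1) 0
  have hm : 0 ≤ m := le_max_right _ _
  have hconv := (convexOn_rpow hα).2 (mem_Ici.2 hv0) (mem_Ici.2 hm)
    (sub_nonneg.2 hv1) hv0 (by ring)
  simp only [smul_eq_mul] at hconv
  have huv : u * v ≤ (1 - v) * v + v * m := by
    nlinarith [le_max_left (u + v - 1) 0]
  calc (u * v) ^ α - m ^ α
      ≤ ((1 - v) * v + v * m) ^ α - m ^ α := by gcongr
    _ ≤ (1 - v) * v ^ α + v * m ^ α - m ^ α := by gcongr
    _ ≤ (1 - v) * v ^ α := by nlinarith [rpow_nonneg hm α]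

theorem rpow_eq_rpow_sub_one_mul {x : ℝ} (hα : α ≠ 0) (hx : 0 ≤ x) :
    x ^ α = x ^ (α - 1) * x := by
  simpa using rpow_add_one' hx (y := α - 1) (by simpa)

theorem mul_sub_le_rpow_sub_rpow {w P : ℝ} (hα : 1 ≤ α) (hw : 0 ≤ w) (hwP : w ≤ P) :
    P ^ (α - 1) * (P - w) ≤ P ^ α - w ^ α := by
  have hα0 : α ≠ 0 := (zero_lt_one.trans_le hα).ne'
  have : w ^ (α - 1) ≤ P ^ (α - 1) := rpow_le_rpow hw hwP (by linarith)
  rw [rpow_eq_rpow_sub_one_mul hα0 (hw.trans hwP), rpow_eq_rpow_sub_one_mul hα0 hw]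
  nlinarith

theorem le_greenKernel (hα : 1 ≤ α) (hu : u ∈ Icc (0 : ℝ) 1) (hv : v ∈ Icc (0 : ℝ) 1) :
    u ^ α * (1 - u) * (v ^ α * (1 - v)) ≤ greenKernel α u v := by
  obtain ⟨hu0, hu1⟩ := hu
  obtain ⟨hv0, hv1⟩ := hv
  set P := u * v
  set c := (1 - u) * (1 - v)
  have hP0 : 0 ≤ P := mul_nonneg hu0 hv0
  have hP1 : P ≤ 1 := mul_le_one₀ hu1 hv0 hv1
  have hc0 : 0 ≤ c := mul_nonneg (by linarith) (by linarith)
  have hc1 : c ≤ 1 := mul_le_one₀ (by linarith) (by linarith) (by linarith)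
  have hmax : max (u + v - 1) 0 = max (P - c) 0 := by congr 1; ring
  have hgap : P * c ≤ P - max (P - c) 0 := by
    rcases le_total c P with h | h
    · rw [max_eq_left (by linarith)]; nlinarith
    · rw [max_eq_right (by linarith)]; nlinarith
  calc u ^ α * (1 - u) * (v ^ α * (1 - v)) = P ^ α * c := by
        simp only [P, c, mul_rpow hu0 hv0]; ring
    _ = P ^ (α - 1) * (P * c) := by
        rw [rpow_eq_rpow_sub_one_mul (zero_lt_one.trans_le hα).ne' hP0]; ring
    _ ≤ P ^ (α - 1) * (P - max (P - c) 0) := by gcongr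
    _ ≤ greenKernel α u v := by
        rw [greenKernel, hmax]
        exact mul_sub_le_rpow_sub_rpow hα (le_max_right _ _) (max_le (by linarith) hP0)

end greenKernel

noncomputable def logCoord (a b t : ℝ) : ℝ :=
  log (t / a) / log (b / a)

section logCoord

variable {a b t : ℝ}

theorem log_div_pos (ha : 0 < a) (hab : a < b) : 0 < log (b / a) :=
  log_pos ((one_lt_div ha).2 hab)

theorem logCoord_mem_Icc (ha : 0 < a) (hab : a < b) (ht : t ∈ Icc a b) :
    logCoord a b t ∈ Icc (0 : ℝ) 1 := by
  have hL := log_div_pos ha hab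
  refine ⟨div_nonneg (log_nonneg ((one_le_div ha).2 ht.1)) hL.le, (div_le_one hL).2 ?_⟩
  exact log_le_log (div_pos (ha.trans_le ht.1) ha) (div_le_div_of_nonneg_right ht.2 ha.le)

theorem one_sub_logCoord (ha : 0 < a) (hab : a < b) (ht : 0 < t) :
    1 - logCoord a b t = log (b / t) / log (b / a) := by
  have hL := log_div_pos ha hab
  rw [logCoord, one_sub_div hL.ne', log_div ht.ne' ha.ne', log_div (ha.trans hab).ne' ha.ne',
    log_div (ha.trans hab).ne' ht.ne']
  ring_nf

end logCoord

theorem G_eq_greenKernel {a b μ t τ : ℝ} (ha : 0 < a) (hab : a < b) (hμ : μ ≠ 1)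
    (ht : a ≤ t) (hτ : τ ∈ Icc a b) :
    G a b μ t τ = log (b / a) ^ (μ - 1) / Gamma μ *
      greenKernel (μ - 1) (logCoord a b t) (1 - logCoord a b τ) := by
  have hL := log_div_pos ha hab
  have ht0 := ha.trans_le ht
  have hτ0 := ha.trans_le hτ.1
  have hx : 0 ≤ log (t / a) := log_nonneg ((one_le_div ha).2 ht)
  have hy : 0 ≤ log (b / τ) := log_nonneg ((one_le_div hτ0).2 hτ.2)
  have hsum : logCoord a b t + log (b / τ) / log (b / a) - 1 = log (t / τ) / log (b / a) := by
    rw [logCoord, log_div ht0.ne' ha.ne', log_div (ha.trans hab).ne' ha.ne',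
      log_div (ha.trans hab).ne' hτ0.ne', log_div ht0.ne' hτ0.ne']
    rw [log_div (ha.trans hab).ne' ha.ne'] at hL
    field_simp
    ring
  rw [one_sub_logCoord ha hab hτ0, greenKernel, hsum, logCoord, G,
    mul_rpow (div_nonneg hx hL.le) (div_nonneg hy hL.le), div_rpow hx hL.le, div_rpow hy hL.le]
  split_ifs with hτt
  · have hz : 0 ≤ log (t / τ) := log_nonneg ((one_le_div hτ0).2 hτt)
    rw [max_eq_left (div_nonneg hz hL.le), div_rpow hz hL.le]
    have hLμ := rpow_pos_of_pos hL (μ - 1)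
    field_simp
  · have hz : log (t / τ) < 0 := log_neg (div_pos ht0 hτ0) ((div_lt_one hτ0).2 (not_le.1 hτt))
    rw [max_eq_right (div_nonpos_of_nonpos_of_nonneg hz.le hL.le), zero_rpow (sub_ne_zero.2 hμ)]
    have hLμ := rpow_pos_of_pos hL (μ - 1)
    field_simp
    ring

theorem stmt_6_general (a b μ : ℝ) (ha : 0 < a) (hab : a < b) (hμ2 : 2 < μ) :
    ∀ t ∈ Set.Icc a b, ∀ τ ∈ Set.Icc a b, ∀ s ∈ Set.Icc a b,
      (Real.log (t / a) ^ (μ - 1) * Real.log (b / t) / Real.log (b / a) ^ μ) * G a b μ s τ ≤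
        G a b μ t τ := by
  intro t ht τ hτ s hs
  have hα : 1 ≤ μ - 1 := by linarith
  have hL := log_div_pos ha hab
  have hC : 0 ≤ log (b / a) ^ (μ - 1) / Gamma μ :=
    div_nonneg (rpow_nonneg hL.le _) (Gamma_pos_of_pos (by linarith)).le
  have hweight : log (t / a) ^ (μ - 1) * log (b / t) / log (b / a) ^ μ =
      logCoord a b t ^ (μ - 1) * (1 - logCoord a b t) := by
    rw [one_sub_logCoord ha hab (ha.trans_le ht.1), logCoord,
      div_rpow (log_nonneg ((one_le_div ha).2 ht.1)) hL.le,
      rpow_eq_rpow_sub_one_mul (by linarith) hL.le]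
    field_simp
  set u := logCoord a b t
  set v := 1 - logCoord a b τ
  have hu := logCoord_mem_Icc ha hab ht
  have hv : v ∈ Icc (0 : ℝ) 1 := by
    obtain ⟨h0, h1⟩ := logCoord_mem_Icc ha hab hτ
    exact ⟨sub_nonneg.2 h1, by linarith⟩
  have hw : 0 ≤ u ^ (μ - 1) * (1 - u) := mul_nonneg (rpow_nonneg hu.1 _) (sub_nonneg.2 hu.2)
  have hμ1 : μ ≠ 1 := by linarith
  rw [hweight, G_eq_greenKernel ha hab hμ1 hs.1 hτ, G_eq_greenKernel ha hab hμ1 ht.1 hτ]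
  set C := log (b / a) ^ (μ - 1) / Gamma μ
  calc u ^ (μ - 1) * (1 - u) * (C * greenKernel (μ - 1) (logCoord a b s) v)
      ≤ u ^ (μ - 1) * (1 - u) * (C * ((1 - v) * v ^ (μ - 1))) := by
        gcongr
        exact greenKernel_le hα (logCoord_mem_Icc ha hab hs) hv
    _ = C * (u ^ (μ - 1) * (1 - u) * (v ^ (μ - 1) * (1 - v))) := by ring
    _ ≤ C * greenKernel (μ - 1) u v := by
        gcongr
        exact le_greenKernel hα hu hv

theorem stmt_6 (a b μ : ℝ) (ha : 0 < a) (hab : a < b) (hμ2 : 2 < μ) (hμ3 : μ < 3) :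
    ∀ t ∈ Set.Icc a b, ∀ τ ∈ Set.Icc a b, ∀ s ∈ Set.Icc a b,
      (Real.log (t / a) ^ (μ - 1) * Real.log (b / t) / Real.log (b / a) ^ μ) * G a b μ s τ ≤
        G a b μ t τ :=
  stmt_6_general a b μ ha hab hμ2
end

section
/- For 0 < a < b and 2 < μ < 3, the function x(t) = c₁·(ln(t/a))^(μ-1) − (1/Γ(μ))·∫_a^t (ln(t/τ))^(μ-1)·y(τ)·(dτ/τ), with c₁ = (1/(Γ(μ)·(ln(b/a))^(μ-1)))·∫_a^b (ln(b/τ))^(μ-1)·y(τ)·(dτ/τ), can be rewritten for every t ∈ [a,b] as x(t) = ∫_a^b G(t,τ)·y(τ)·(dτ/τ), where G is the piecewise-defined Green's function of the Hadamard fractional BVP. -/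
/-! Split the integral at `τ = t`. On both pieces the kernel `G t τ` is the common term
`(ln(t/a))^(μ-1) (ln(b/τ))^(μ-1) / (Γ(μ) (ln(b/a))^(μ-1))`, corrected on `τ ≤ t` by
`-(ln(t/τ))^(μ-1) / Γ(μ)`. The common term integrates over `[a,b]` to `c₁ (ln(t/a))^(μ-1)`,
the correction over `[a,t]` to the fractional integral subtracted in `x t`. -/

open MeasureTheory intervalIntegral Real Set

theorem intervalIntegral.integral_eq_add_of_eqOn_Ioc {E : Type*} [NormedAddCommGroup E]
    [NormedSpace ℝ E] {μ : Measure ℝ} {f g h : ℝ → E} {a b t : ℝ}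
    (hat : a ≤ t) (htb : t ≤ b)
    (hg : IntervalIntegrable g μ a t) (hh : IntervalIntegrable h μ t b)
    (hfg : EqOn f g (Ioc a t)) (hfh : EqOn f h (Ioc t b)) :
    ∫ x in a..b, f x ∂μ = (∫ x in a..t, g x ∂μ) + ∫ x in t..b, h x ∂μ := by
  rw [← uIoc_of_le hat] at hfg
  rw [← uIoc_of_le htb] at hfh
  rw [← integral_add_adjacent_intervals (hg.congr hfg.symm) (hh.congr hfh.symm),
    integral_congr_ae (.of_forall hfg), integral_congr_ae (.of_forall hfh)]

theorem continuousOn_log_div_rpow {c p : ℝ} (hc : c ≠ 0) (hp : 0 ≤ p) :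
    ContinuousOn (fun τ => log (c / τ) ^ p) {0}ᶜ :=
  ((continuousOn_const.div continuousOn_id fun _ h => h).log fun _ h => div_ne_zero hc h).rpow_const
    fun _ _ => Or.inr hp

theorem intervalIntegrable_log_div_rpow_mul_div {y : ℝ → ℝ} {c p u v : ℝ} (hc : c ≠ 0)
    (hp : 0 ≤ p) (hu : 0 < u) (hv : 0 < v)
    (hy : IntervalIntegrable (fun τ => y τ / τ) volume u v) :
    IntervalIntegrable (fun τ => log (c / τ) ^ p * y τ / τ) volume u v := by
  simp_rw [mul_div_assoc]
  refine hy.continuousOn_mul ((continuousOn_log_div_rpow hc hp).mono fun τ hτ => ?_)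
  exact (lt_min hu hv |>.trans_le hτ.1).ne'

section Green

variable {a b μ t τ : ℝ}

theorem G_of_le (ha : 0 < a) (hab : a < b) (h : τ ≤ t) :
    G a b μ t τ = log (t / a) ^ (μ - 1) / (Gamma μ * log (b / a) ^ (μ - 1)) *
      log (b / τ) ^ (μ - 1) - log (t / τ) ^ (μ - 1) / Gamma μ := by
  have hL : log (b / a) ^ (μ - 1) ≠ 0 :=
    (rpow_pos_of_pos (log_pos ((one_lt_div ha).mpr hab)) _).ne'
  rw [G, if_pos h]
  field_simp

theorem G_of_lt (h : t < τ) :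
    G a b μ t τ = log (t / a) ^ (μ - 1) / (Gamma μ * log (b / a) ^ (μ - 1)) *
      log (b / τ) ^ (μ - 1) := by
  rw [G, if_neg h.not_ge]
  ring

end Green

theorem stmt_15_general (a b μ : ℝ) (ha : 0 < a) (hab : a < b) (hμ2 : 2 < μ)
    (y : ℝ → ℝ) (hy : IntervalIntegrable (fun τ => y τ / τ) MeasureTheory.volume a b)
    (c₁ : ℝ)
    (hc₁ : c₁ = (1 / (Real.Gamma μ * Real.log (b / a) ^ (μ - 1))) *
      ∫ τ in a..b, Real.log (b / τ) ^ (μ - 1) * y τ / τ)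
    (x : ℝ → ℝ)
    (hx : x = fun t => c₁ * Real.log (t / a) ^ (μ - 1) -
      (1 / Real.Gamma μ) * ∫ τ in a..t, Real.log (t / τ) ^ (μ - 1) * y τ / τ) :
    ∀ t ∈ Set.Icc a b, x t = ∫ τ in a..b, G a b μ t τ * y τ / τ := by
  rintro t ⟨hat, htb⟩
  have hp : 0 ≤ μ - 1 := by linarith
  have ht : 0 < t := ha.trans_le hat
  have hb : 0 < b := ht.trans_le htb
  have htab : t ∈ uIcc a b := mem_uIcc_of_le hat htb
  have hy_at : IntervalIntegrable (fun τ => y τ / τ) volume a t :=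
    hy.mono_set (uIcc_subset_uIcc_left htab)
  have hy_tb : IntervalIntegrable (fun τ => y τ / τ) volume t b :=
    hy.mono_set (uIcc_subset_uIcc_right htab)
  have hB_at := intervalIntegrable_log_div_rpow_mul_div hb.ne' hp ha ht hy_at
  have hB_tb := intervalIntegrable_log_div_rpow_mul_div hb.ne' hp ht hb hy_tb
  have hC_at := intervalIntegrable_log_div_rpow_mul_div ht.ne' hp ha ht hy_at
  set k := log (t / a) ^ (μ - 1) / (Gamma μ * log (b / a) ^ (μ - 1))
  rw [integral_eq_add_of_eqOn_Ioc hat htb ((hB_at.const_mul k).sub (hC_at.div_const (Gamma μ)))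
      (hB_tb.const_mul k)
      (fun τ hτ => by simp only [G_of_le ha hab hτ.2]; ring)
      (fun τ hτ => by simp only [G_of_lt hτ.1]; ring),
    integral_sub (hB_at.const_mul k) (hC_at.div_const _), intervalIntegral.integral_const_mul,
    intervalIntegral.integral_const_mul, intervalIntegral.integral_div, hx, hc₁,
    ← integral_add_adjacent_intervals hB_at hB_tb]
  ring

theorem stmt_15 (a b μ : ℝ) (ha : 0 < a) (hab : a < b) (hμ2 : 2 < μ) (hμ3 : μ < 3)
    (y : ℝ → ℝ) (hy : IntervalIntegrable (fun τ => y τ / τ) MeasureTheory.volume a b)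
    (c₁ : ℝ)
    (hc₁ : c₁ = (1 / (Real.Gamma μ * Real.log (b / a) ^ (μ - 1))) *
      ∫ τ in a..b, Real.log (b / τ) ^ (μ - 1) * y τ / τ)
    (x : ℝ → ℝ)
    (hx : x = fun t => c₁ * Real.log (t / a) ^ (μ - 1) -
      (1 / Real.Gamma μ) * ∫ τ in a..t, Real.log (t / τ) ^ (μ - 1) * y τ / τ) :
    ∀ t ∈ Set.Icc a b, x t = ∫ τ in a..b, G a b μ t τ * y τ / τ :=
  stmt_15_general a b μ ha hab hμ2 y hy c₁ hc₁ x hx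
end

section
/- Let 0 < a < b and 2 < μ < 3. For fixed t ∈ (a, b), the function τ ↦ (ln(t/a))^(μ-1)·(ln(b/τ))^(μ-1) − (ln(t/τ))^(μ-1)·(ln(b/a))^(μ-1), defined for τ ∈ [a, t], is nonnegative. -/
/-!
Writing `x = log a ≤ y = log τ ≤ z = log t ≤ w = log b`, the cross-ratio inequality
`log (t / τ) · log (b / a) ≤ log (t / a) · log (b / τ)` reads `(z - y)(w - x) ≤ (z - x)(w - y)`,
whose two sides differ by `(y - x)(w - z) ≥ 0`. All four logarithms are nonnegative, so raising
to the power `μ - 1 > 0` preserves the inequality.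
-/

open Real

lemma sub_mul_sub_le_sub_mul_sub {R : Type*} [CommRing R] [PartialOrder R] [IsOrderedRing R]
    {x y z w : R} (hxy : x ≤ y) (hzw : z ≤ w) :
    (z - y) * (w - x) ≤ (z - x) * (w - y) := by
  have hgap : (z - x) * (w - y) - (z - y) * (w - x) = (y - x) * (w - z) := by ring
  exact sub_nonneg.1 (hgap ▸ mul_nonneg (sub_nonneg.2 hxy) (sub_nonneg.2 hzw))

lemma log_div_nonneg {x y : ℝ} (hy : 0 < y) (hyx : y ≤ x) : 0 ≤ log (x / y) :=
  log_nonneg ((one_le_div hy).2 hyx)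

lemma log_div_mul_log_div_le {a τ t b : ℝ} (ha : 0 < a) (haτ : a ≤ τ) (ht : 0 < t) (htb : t ≤ b) :
    log (t / τ) * log (b / a) ≤ log (t / a) * log (b / τ) := by
  have hτ : 0 < τ := ha.trans_le haτ
  have hb : 0 < b := ht.trans_le htb
  rw [log_div ht.ne' hτ.ne', log_div hb.ne' ha.ne', log_div ht.ne' ha.ne', log_div hb.ne' hτ.ne']
  exact sub_mul_sub_le_sub_mul_sub (log_le_log ha haτ) (log_le_log ht htb)

lemma log_div_rpow_mul_log_div_rpow_le {a τ t b p : ℝ} (hp : 0 ≤ p) (ha : 0 < a) (haτ : a ≤ τ)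
    (hτt : τ ≤ t) (htb : t ≤ b) :
    log (t / τ) ^ p * log (b / a) ^ p ≤ log (t / a) ^ p * log (b / τ) ^ p := by
  have hτ : 0 < τ := ha.trans_le haτ
  have ht : 0 < t := hτ.trans_le hτt
  have htτ := log_div_nonneg hτ hτt
  have hba := log_div_nonneg ha (haτ.trans (hτt.trans htb))
  rw [← mul_rpow htτ hba,
    ← mul_rpow (log_div_nonneg ha (haτ.trans hτt)) (log_div_nonneg hτ (hτt.trans htb))]
  exact rpow_le_rpow (mul_nonneg htτ hba) (log_div_mul_log_div_le ha haτ ht htb) hp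

theorem stmt_18_general (a b μ : ℝ) (ha : 0 < a) (hμ2 : 2 < μ)
    (t : ℝ) (ht : t ∈ Set.Ioo a b) :
    ∀ τ ∈ Set.Icc a t,
      0 ≤ Real.log (t / a) ^ (μ - 1) * Real.log (b / τ) ^ (μ - 1) -
        Real.log (t / τ) ^ (μ - 1) * Real.log (b / a) ^ (μ - 1) := by
  rintro τ ⟨haτ, hτt⟩
  exact sub_nonneg.2 (log_div_rpow_mul_log_div_rpow_le (by linarith) ha haτ hτt ht.2.le)

theorem stmt_18 (a b μ : ℝ) (ha : 0 < a) (hab : a < b) (hμ2 : 2 < μ) (hμ3 : μ < 3)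
    (t : ℝ) (ht : t ∈ Set.Ioo a b) :
    ∀ τ ∈ Set.Icc a t,
      0 ≤ Real.log (t / a) ^ (μ - 1) * Real.log (b / τ) ^ (μ - 1) -
        Real.log (t / τ) ^ (μ - 1) * Real.log (b / a) ^ (μ - 1) :=
  stmt_18_general a b μ ha hμ2 t ht
end
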